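/- arXiv:1705.10089 — 2 statements merged into one kernel-verified Lean document; each statement's English description precedes it below -/
import Mathlib

section
/- Let R be a semiring and V an R-module with an additive spine S. Then every summand absorbing submodule W of V is generated as an R-module by W ∩ S, and moreover W ∩ S is an additive spine of W. -/
def halo (R : Type*) {V : Type*} [Semiring R] [AddCommMonoid V] [Module R V]
    (S : Set V) : Set V :=
  {v | ∃ l m : R, l • v ∈ S ∧ m • (l • v) = v}

/-- Halo of `S` computed inside the subset `W` of `V`. -/
def haloIn (R : Type*) {V : Type*} [Semiring R] [AddCommMonoid V] [Module R V]
    (W S : Set V) : Set V :=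
  {v | v ∈ W ∧ ∃ l m : R, l • v ∈ S ∧ m • (l • v) = v}

def IsAdditiveSpine (R : Type*) {V : Type*} [Semiring R] [AddCommMonoid V] [Module R V]
    (S : Set V) : Prop :=
  AddSubmonoid.closure (halo R S) = ⊤

def IsSA {R V : Type*} [Semiring R] [AddCommMonoid V] [Module R V]
    (W : Submodule R V) : Prop :=
  ∀ x y : V, x + y ∈ W → x ∈ W ∧ y ∈ W

/-!
Write `w ∈ W` as a sum of halo elements `v` of `S`. Summand absorption puts every `v` in `W`, hence
`λ • v ∈ W ∩ S`, so `v` lies in the halo of `W ∩ S` inside `W`, and `v = μ • (λ • v)` lies in the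
span of `W ∩ S`.
-/

section

variable {R V : Type*} [Semiring R] [AddCommMonoid V] [Module R V]

theorem IsSA.mem_closure_inter {W : Submodule R V} (hW : IsSA W) {T : Set V} {x : V}
    (hxT : x ∈ AddSubmonoid.closure T) (hxW : x ∈ W) :
    x ∈ AddSubmonoid.closure (T ∩ W) := by
  induction hxT using AddSubmonoid.closure_induction with
  | mem y hy => exact AddSubmonoid.subset_closure ⟨hy, hxW⟩
  | zero => exact zero_mem _
  | add y z _ _ ihy ihz =>
    obtain ⟨hyW, hzW⟩ := hW y z hxW
    exact add_mem (ihy hyW) (ihz hzW)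

theorem halo_inter_subset_haloIn (S : Set V) (W : Submodule R V) :
    halo R S ∩ W ⊆ haloIn R W (W ∩ S) := by
  rintro v ⟨⟨l, m, hlS, hml⟩, hvW⟩
  exact ⟨hvW, l, m, ⟨W.smul_mem l hvW, hlS⟩, hml⟩

theorem haloIn_subset_span (W T : Set V) : haloIn R W T ⊆ Submodule.span R T := by
  rintro v ⟨-, l, m, hlT, hml⟩
  rw [SetLike.mem_coe, ← hml]
  exact Submodule.smul_mem _ m (Submodule.subset_span hlT)

end

theorem sa_gen_by_spine {R V : Type*} [Semiring R] [AddCommMonoid V] [Module R V]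
    (S : Set V) (hS : IsAdditiveSpine R S)
    (W : Submodule R V) (hW : IsSA W) :
    W = Submodule.span R ((W : Set V) ∩ S) ∧
      (W : Set V) ⊆ AddSubmonoid.closure (haloIn R (W : Set V) ((W : Set V) ∩ S)) := by
  have hspine : (W : Set V) ⊆ AddSubmonoid.closure (haloIn R (W : Set V) ((W : Set V) ∩ S)) :=
    fun w hw => AddSubmonoid.closure_mono (halo_inter_subset_haloIn S W)
      (hW.mem_closure_inter (hS ▸ AddSubmonoid.mem_top w) hw)
  have hclosure_le_span :
      AddSubmonoid.closure (haloIn R (W : Set V) ((W : Set V) ∩ S)) ≤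
        (Submodule.span R ((W : Set V) ∩ S)).toAddSubmonoid :=
    AddSubmonoid.closure_le.mpr (haloIn_subset_span _ _)
  refine ⟨le_antisymm (fun w hw => hclosure_le_span (hspine hw)) ?_, hspine⟩
  exact Submodule.span_le.mpr Set.inter_subset_left
end

section
/- Let R be a semiring, V an R-module, (V_i)_{i ∈ I} a family of submodules with V = Σ_{i∈I} V_i, and for each i a subset S_i ⊆ V_i which is an additive spine of V_i. Then ⋃_{i∈I} S_i is an additive spine of V, and moreover ⋃_{i∈I} hal_{V_i}(S_i) = hal_V(⋃_{i∈I} S_i). -/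
section Halo

variable {R V : Type*} [Semiring R] [AddCommMonoid V] [Module R V]

theorem halo_mono {S T : Set V} (h : S ⊆ T) : halo R S ⊆ halo R T :=
  fun _ ⟨l, m, hl, hm⟩ => ⟨l, m, h hl, hm⟩

theorem halo_iUnion {ι : Type*} (S : ι → Set V) :
    halo R (⋃ i, S i) = ⋃ i, halo R (S i) := by
  ext v
  simp only [halo, Set.mem_iUnion, Set.mem_ofPred_eq]
  constructor
  · rintro ⟨l, m, ⟨i, hl⟩, hm⟩
    exact ⟨i, l, m, hl, hm⟩
  · rintro ⟨i, l, m, hl, hm⟩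
    exact ⟨l, m, ⟨i, hl⟩, hm⟩

theorem haloIn_eq_halo {W : Submodule R V} {S : Set V} (hS : S ⊆ W) :
    haloIn R (W : Set V) S = halo R S := by
  ext v
  refine ⟨fun ⟨_, h⟩ => h, fun ⟨l, m, hl, hm⟩ => ⟨?_, l, m, hl, hm⟩⟩
  rw [← hm]
  exact W.smul_mem m (hS hl)

theorem isAdditiveSpine_iUnion {ι : Type*} (W : ι → Submodule R V) (hW : ⨆ i, W i = ⊤)
    (S : ι → Set V) (hS : ∀ i, (W i : Set V) ⊆ AddSubmonoid.closure (halo R (S i))) :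
    IsAdditiveSpine R (⋃ i, S i) := by
  rw [IsAdditiveSpine, eq_top_iff, ← Submodule.top_toAddSubmonoid (R := R), ← hW,
    Submodule.iSup_toAddSubmonoid, iSup_le_iff]
  intro i v hv
  exact AddSubmonoid.closure_mono (halo_mono (R := R) (Set.subset_iUnion S i)) (hS i hv)

end Halo

theorem union_of_spines {R V : Type*} [Semiring R] [AddCommMonoid V] [Module R V]
    {ι : Type*} (Vf : ι → Submodule R V) (hsum : (⨆ i, Vf i) = ⊤)
    (S : ι → Set V) (hsub : ∀ i, S i ⊆ Vf i)
    (hsp : ∀ i, (Vf i : Set V) ⊆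
      AddSubmonoid.closure (haloIn R (Vf i : Set V) (S i))) :
    IsAdditiveSpine R (⋃ i, S i) ∧
      (⋃ i, haloIn R (Vf i : Set V) (S i)) = halo R (⋃ i, S i) := by
  have hhalo : ∀ i, haloIn R (Vf i : Set V) (S i) = halo R (S i) :=
    fun i => haloIn_eq_halo (hsub i)
  simp only [hhalo] at hsp ⊢
  exact ⟨isAdditiveSpine_iUnion Vf hsum S hsp, (halo_iUnion S).symm⟩
end
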